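/- arXiv:1902.03874 — 4 statements merged into one kernel-verified Lean document; each statement's English description precedes it below -/
import Mathlib

section
/- Let 0 < ε < 1, d > 0, and let x, y ∈ ℝ^N be nonzero with ‖x‖², ‖y‖², ⟨x, y⟩ ∈ (d(1−ε), d(1+ε)). Write y = t·(x/‖x‖) + w with w orthogonal to x, where t = ⟨y, x⟩/‖x‖. Then 0 ≤ t ≤ √(d(1+ε)) and ‖w‖ ≤ t·(2√ε/(1−ε)); that is, y lies in the cone from the origin in the direction of x with height √(d(1+ε)) and base radius √(d(1+ε))·2√ε/(1−ε). -/
open RealInnerProductSpace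

/-- Microstates lie in a thin cone: if `x, y ∈ ℝ^N` are nonzero with
`‖x‖², ‖y‖², ⟨x,y⟩ ∈ (d(1−ε), d(1+ε))`, `0 < ε < 1`, `d > 0`, and we write
`y = t·(x/‖x‖) + w` with `t = ⟨y,x⟩/‖x‖` and `w ⟂ x`, then
`0 ≤ t ≤ √(d(1+ε))` and `‖w‖ ≤ t·(2√ε/(1−ε))`. -/
theorem microstate_in_cone (N : ℕ) (ε d : ℝ) (hε0 : 0 < ε) (hε1 : ε < 1) (hd : 0 < d)
    (x y : EuclideanSpace ℝ (Fin N)) (hx : x ≠ 0) (hy : y ≠ 0)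
    (hxx : ‖x‖ ^ 2 ∈ Set.Ioo (d * (1 - ε)) (d * (1 + ε)))
    (hyy : ‖y‖ ^ 2 ∈ Set.Ioo (d * (1 - ε)) (d * (1 + ε)))
    (hxy : ⟪x, y⟫ ∈ Set.Ioo (d * (1 - ε)) (d * (1 + ε))) :
    ∀ t w, t = ⟪y, x⟫ / ‖x‖ → w = y - t • (‖x‖⁻¹ • x) →
      ⟪w, x⟫ = 0 ∧ 0 ≤ t ∧ t ≤ Real.sqrt (d * (1 + ε)) ∧
        ‖w‖ ≤ t * (2 * Real.sqrt ε / (1 - ε)) := by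
  intro t w ht hw
  have h1ε : (0:ℝ) < 1 - ε := by linarith
  have hU : 0 < d * (1 + ε) := by positivity
  have hL : 0 < d * (1 - ε) := by positivity
  have hnx : 0 < ‖x‖ := norm_pos_iff.mpr hx
  have hsU : Real.sqrt (d * (1 + ε)) ^ 2 = d * (1 + ε) := Real.sq_sqrt hU.le
  have hsUpos : 0 < Real.sqrt (d * (1 + ε)) := Real.sqrt_pos.mpr hU
  have hxU : ‖x‖ ≤ Real.sqrt (d * (1 + ε)) := by
    nlinarith [hxx.2, norm_nonneg x]
  have hyU : ‖y‖ ≤ Real.sqrt (d * (1 + ε)) := by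
    nlinarith [hyy.2, norm_nonneg y]
  have hyx : ⟪y, x⟫ = ⟪x, y⟫ := real_inner_comm x y
  have htnx : t * ‖x‖ = ⟪y, x⟫ := by
    rw [ht]; field_simp
  have htlb : d * (1 - ε) / Real.sqrt (d * (1 + ε)) ≤ t := by
    rw [ht, hyx]
    exact div_le_div₀ (le_of_lt (hL.trans hxy.1)) hxy.1.le hnx hxU
  have ht0 : 0 ≤ t := le_trans (by positivity) htlb
  have htub : t ≤ Real.sqrt (d * (1 + ε)) := by
    have hcs : ⟪y, x⟫ ≤ ‖y‖ * ‖x‖ := real_inner_le_norm y x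
    have : t ≤ ‖y‖ := by
      rw [ht]
      rw [div_le_iff₀ hnx]
      exact hcs
    linarith
  have hwx : ⟪w, x⟫ = 0 := by
    rw [hw, inner_sub_left, real_inner_smul_left, real_inner_smul_left,
      real_inner_self_eq_norm_sq]
    have hh : ‖x‖ ^ 2 * ‖x‖⁻¹ = ‖x‖ := by
      rw [sq, mul_assoc, mul_inv_cancel₀ hnx.ne', mul_one]
    rw [mul_comm (‖x‖⁻¹), hh]
    linarith [htnx]
  have hwsq : ‖w‖ ^ 2 = ‖y‖ ^ 2 - t ^ 2 := by
    rw [hw, norm_sub_sq_real]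
    have h1 : ⟪y, t • (‖x‖⁻¹ • x)⟫ = t * (‖x‖⁻¹ * ⟪y, x⟫) := by
      rw [real_inner_smul_right, real_inner_smul_right]
    have h2 : ‖t • (‖x‖⁻¹ • x)‖ = |t| := by
      rw [norm_smul, norm_smul, norm_inv, norm_norm, Real.norm_eq_abs,
        inv_mul_cancel₀ hnx.ne']
      ring
    have h3 : ‖x‖⁻¹ * ⟪y, x⟫ = t := by
      rw [← htnx, mul_comm t, ← mul_assoc, inv_mul_cancel₀ hnx.ne', one_mul]
    rw [h1, h3, h2, sq_abs]
    ring
  refine ⟨hwx, ht0, htub, ?_⟩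
  have hse : Real.sqrt ε ^ 2 = ε := Real.sq_sqrt hε0.le
  have hsepos : 0 < Real.sqrt ε := Real.sqrt_pos.mpr hε0
  have hc : 0 ≤ t * (2 * Real.sqrt ε / (1 - ε)) := by positivity
  have ht2 : (d * (1 - ε)) ^ 2 ≤ t ^ 2 * (d * (1 + ε)) := by
    have hpow : (d * (1 - ε) / Real.sqrt (d * (1 + ε))) ^ 2 ≤ t ^ 2 :=
      pow_le_pow_left₀ (by positivity) htlb 2
    have heq : (d * (1 - ε) / Real.sqrt (d * (1 + ε))) ^ 2
        = (d * (1 - ε)) ^ 2 / (d * (1 + ε)) := by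
      rw [div_pow, hsU]
    rw [heq, div_le_iff₀ hU] at hpow
    exact hpow
  have habs : ‖w‖ ^ 2 ≤ (t * (2 * Real.sqrt ε / (1 - ε))) ^ 2 := by
    have h4 : (2 * Real.sqrt ε) ^ 2 = 4 * ε := by
      rw [mul_pow, hse]; norm_num
    have hexp : (t * (2 * Real.sqrt ε / (1 - ε))) ^ 2
        = t ^ 2 * (4 * ε) / (1 - ε) ^ 2 := by
      rw [mul_pow, div_pow, h4]; ring
    rw [hexp, hwsq, le_div_iff₀ (by positivity : (0:ℝ) < (1 - ε) ^ 2)]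
    nlinarith [mul_le_mul_of_nonneg_right ht2 (by positivity : (0:ℝ) ≤ 1 + ε),
      mul_lt_mul_of_pos_right hyy.2 (by positivity : (0:ℝ) < d * (1 - ε) ^ 2),
      hd, sq_nonneg t, sq_nonneg (1 - ε)]
  calc ‖w‖ = Real.sqrt (‖w‖ ^ 2) := (Real.sqrt_sq (norm_nonneg w)).symm
    _ ≤ Real.sqrt ((t * (2 * Real.sqrt ε / (1 - ε))) ^ 2) := Real.sqrt_le_sqrt habs
    _ = t * (2 * Real.sqrt ε / (1 - ε)) := Real.sqrt_sq hc
end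

section
/- Let A be an n×n real symmetric positive semidefinite matrix that is not invertible but nonzero, i.e., 1 ≤ rank(A) ≤ n−1. Then lim_{ε→0+} log(det(ε·I_n + A))/log(ε) = n − rank(A). -/
/-!
Diagonalising, `det (ε • 1 + A) = ∏ i, (ε + λᵢ)` with eigenvalues `λᵢ ≥ 0`, so
`log det (ε • 1 + A) / log ε = ∑ i, log (ε + λᵢ) / log ε`. A zero eigenvalue contributes
exactly `1`, while for `λᵢ > 0` the numerator tends to `log λᵢ` and the denominator to `-∞`.
The limit therefore counts the zero eigenvalues, of which there are `n - rank A`.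
-/

open Filter Topology

open Polynomial in
theorem Matrix.IsHermitian.det_smul_one_add {𝕜 n : Type*} [RCLike 𝕜] [Fintype n] [DecidableEq n]
    {A : Matrix n n 𝕜} (hA : A.IsHermitian) (t : 𝕜) :
    (t • (1 : Matrix n n 𝕜) + A).det = ∏ i, (t + hA.eigenvalues i) := by
  have h := congrArg (eval (-t)) hA.charpoly_eq
  have hneg : Matrix.scalar n (-t) - A = -(t • 1 + A) := by
    rw [Matrix.scalar_apply, ← smul_one_eq_diagonal, neg_smul]; abel
  rw [eval_charpoly, hneg, Matrix.det_neg, eval_prod] at h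
  simp only [eval_sub, eval_X, eval_C, ← neg_add', neg_eq_neg_one_mul (_ + _),
    Finset.prod_mul_distrib, Finset.prod_const, Finset.card_univ] at h
  exact mul_left_cancel₀ (pow_ne_zero _ (neg_ne_zero.mpr one_ne_zero)) h

theorem Matrix.IsHermitian.card_eigenvalues_eq_zero {𝕜 n : Type*} [RCLike 𝕜] [Fintype n]
    [DecidableEq n] {A : Matrix n n 𝕜} (hA : A.IsHermitian) :
    Fintype.card {i // hA.eigenvalues i = 0} = Fintype.card n - A.rank := by
  rw [hA.rank_eq_card_non_zero_eigs, ← Fintype.card_subtype_compl]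
  simp only [ne_eq, not_not]

theorem tendsto_log_add_div_log {c : ℝ} (hc : 0 ≤ c) :
    Tendsto (fun ε => Real.log (ε + c) / Real.log ε) (𝓝[>] 0) (𝓝 (if c = 0 then 1 else 0)) := by
  rcases hc.eq_or_lt with rfl | hc
  · refine tendsto_const_nhds.congr' ?_
    filter_upwards [Ioo_mem_nhdsGT zero_lt_one] with ε ⟨hε₀, hε₁⟩
    simp [div_self (Real.log_neg hε₀ hε₁).ne]
  · rw [if_neg hc.ne']
    have hshift : Tendsto (· + c) (𝓝[>] (0 : ℝ)) (𝓝 c) := by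
      simpa using ((continuous_add_const c).tendsto 0).mono_left nhdsWithin_le_nhds
    exact ((Real.continuousAt_log hc.ne').tendsto.comp hshift).div_atBot
      Real.tendsto_log_nhdsGT_zero

theorem tendsto_log_prod_add_div_log {ι : Type*} [Fintype ι] {μ : ι → ℝ} (hμ : ∀ i, 0 ≤ μ i) :
    Tendsto (fun ε => Real.log (∏ i, (ε + μ i)) / Real.log ε) (𝓝[>] 0)
      (𝓝 (Fintype.card {i // μ i = 0})) := by
  have h := tendsto_finsetSum Finset.univ fun i _ => tendsto_log_add_div_log (hμ i)
  rw [Finset.sum_boole, ← Fintype.card_subtype] at h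
  refine h.congr' ?_
  filter_upwards [self_mem_nhdsWithin] with ε (hε : 0 < ε)
  rw [Real.log_prod fun i _ => (add_pos_of_pos_of_nonneg hε (hμ i)).ne', Finset.sum_div]

theorem log_det_perturbation_limit_general (n : ℕ) (A : Matrix (Fin n) (Fin n) ℝ)
    (hpsd : A.PosSemidef) :
    Tendsto (fun ε : ℝ =>
        Real.log ((ε • (1 : Matrix (Fin n) (Fin n) ℝ) + A).det) / Real.log ε)
      (nhdsWithin 0 (Set.Ioi 0)) (nhds ((n : ℝ) - A.rank)) := by
  have hA := hpsd.isHermitian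
  have hcard : (Fintype.card {i // hA.eigenvalues i = 0} : ℝ) = n - A.rank := by
    rw [hA.card_eigenvalues_eq_zero, Fintype.card_fin, Nat.cast_sub A.rank_le_width]
  rw [← hcard]
  refine (tendsto_log_prod_add_div_log hpsd.eigenvalues_nonneg).congr fun ε => ?_
  simp [hA.det_smul_one_add]

/-- If `A` is a real symmetric positive semidefinite `n × n` matrix with
`1 ≤ rank(A) ≤ n − 1`, then `lim_{ε→0⁺} log(det(εI + A))/log(ε) = n − rank(A)`. -/
theorem log_det_perturbation_limit (n : ℕ) (A : Matrix (Fin n) (Fin n) ℝ)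
    (hsymm : A.IsSymm) (hpsd : A.PosSemidef) (hrank₁ : 1 ≤ A.rank)
    (hrank₂ : A.rank ≤ n - 1) :
    Tendsto (fun ε : ℝ =>
        Real.log ((ε • (1 : Matrix (Fin n) (Fin n) ℝ) + A).det) / Real.log ε)
      (nhdsWithin 0 (Set.Ioi 0)) (nhds ((n : ℝ) - A.rank)) :=
  log_det_perturbation_limit_general n A hpsd
end

section
/- Let A be a unital C*-algebra with a state φ, let L be a unital C*-subalgebra of A on which φ is tracial (φ(ab) = φ(ba) for all a, b ∈ L), and let y ∈ A be a self-adjoint element commuting with every element of L. Then for all self-adjoint x₁, x₁', x₂ ∈ L, |φ(x₁x₂y) − φ(x₁'x₂y)| ≤ ‖y‖·‖x₂‖·φ((x₁ − x₁')²)^{1/2}. -/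
/-!
Put `d = x₁ - x₁'`, which is self-adjoint, so the difference is `φ (d⋆ (x₂ y))`. A functional that
is nonnegative on every `a⋆a` makes `(a, b) ↦ φ (a⋆b)` a positive semidefinite Hermitian form, and
its Cauchy–Schwarz inequality bounds `|φ (d⋆ (x₂ y))|` by `φ (d²)^{1/2} φ ((x₂ y)⋆(x₂ y))^{1/2}`.
Since `‖φ‖ = 1` and `‖b⋆b‖ = ‖b‖²`, the last factor is at most `‖x₂ y‖ ≤ ‖x₂‖ ‖y‖`.
-/

open scoped ComplexOrder

namespace LinearMap

variable {A : Type*} [Ring A] [StarRing A] [Algebra ℂ A] [StarModule ℂ A]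

-- Polarization: `φ` is real on `(a + b)⋆(a + b)` and on `(a + i b)⋆(a + i b)`.
theorem conj_apply_star_mul_of_nonneg {φ : A →ₗ[ℂ] ℂ} (hφ : ∀ a, 0 ≤ φ (star a * a))
    (a b : A) : starRingEnd ℂ (φ (star a * b)) = φ (star b * a) := by
  have him (c : A) : (φ (star c * c)).im = 0 := (Complex.nonneg_iff.mp (hφ c)).2.symm
  have hsum := him (a + b)
  have hrot := him (a + Complex.I • b)
  simp only [star_add, star_smul, add_mul, mul_add, smul_mul_assoc, mul_smul_comm, map_add,
    map_smul, smul_eq_mul, Complex.add_im, Complex.mul_im, Complex.mul_re, him, Complex.star_def,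
    Complex.conj_I, Complex.I_re, Complex.I_im, Complex.neg_re, Complex.neg_im] at hsum hrot
  apply Complex.ext <;> simp only [Complex.conj_re, Complex.conj_im] <;> linarith

noncomputable abbrev starMulCore {φ : A →ₗ[ℂ] ℂ} (hφ : ∀ a, 0 ≤ φ (star a * a)) :
    PreInnerProductSpace.Core ℂ A where
  inner a b := φ (star a * b)
  conj_inner_symm a b := conj_apply_star_mul_of_nonneg hφ b a
  re_inner_nonneg a := (Complex.nonneg_iff.mp (hφ a)).1
  add_left a b c := by simp only [star_add, add_mul, map_add]
  smul_left a b r := by simp only [star_smul, smul_mul_assoc, map_smul, smul_eq_mul]; rfl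

theorem norm_apply_star_mul_le {φ : A →ₗ[ℂ] ℂ} (hφ : ∀ a, 0 ≤ φ (star a * a)) (a b : A) :
    ‖φ (star a * b)‖ ≤ √(φ (star a * a)).re * √(φ (star b * b)).re :=
  InnerProductSpace.Core.norm_inner_le_norm (c := starMulCore hφ) a b

end LinearMap

namespace ContinuousLinearMap

theorem sqrt_re_apply_star_mul_self_le {A : Type*} [NormedRing A] [StarRing A] [CStarRing A]
    [NormedAlgebra ℂ A] (φ : A →L[ℂ] ℂ) (hφ : ‖φ‖ ≤ 1) (b : A) :
    √(φ (star b * b)).re ≤ ‖b‖ := by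
  refine Real.sqrt_le_iff.mpr ⟨norm_nonneg b, ?_⟩
  calc (φ (star b * b)).re ≤ ‖φ (star b * b)‖ := Complex.re_le_norm _
    _ ≤ ‖φ‖ * ‖star b * b‖ := φ.le_opNorm _
    _ ≤ ‖b‖ ^ 2 := by
      rw [CStarRing.norm_star_mul_self, ← sq]
      exact mul_le_of_le_one_left (by positivity) hφ

end ContinuousLinearMap

theorem wasserstein_key_estimate_general {A : Type*} [NormedRing A]
    [StarRing A] [CStarRing A] [NormedAlgebra ℂ A] [StarModule ℂ A]
    (φ : A →L[ℂ] ℂ) (hφnorm : ‖φ‖ = 1)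
    (hφpos : ∀ a : A, 0 ≤ φ (star a * a))
    (y : A)
    (x₁ x₁' x₂ : A)
    (hx₁sa : IsSelfAdjoint x₁) (hx₁'sa : IsSelfAdjoint x₁') :
    ‖φ (x₁ * x₂ * y) - φ (x₁' * x₂ * y)‖
      ≤ ‖y‖ * ‖x₂‖ * Real.sqrt ((φ ((x₁ - x₁') ^ 2)).re) := by
  have hd : star (x₁ - x₁') = x₁ - x₁' := (hx₁sa.sub hx₁'sa).star_eq
  have hdiff : φ (x₁ * x₂ * y) - φ (x₁' * x₂ * y) = φ (star (x₁ - x₁') * (x₂ * y)) := by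
    rw [← map_sub, hd, ← sub_mul, ← sub_mul, mul_assoc]
  calc ‖φ (x₁ * x₂ * y) - φ (x₁' * x₂ * y)‖
      ≤ √(φ (star (x₁ - x₁') * (x₁ - x₁'))).re * √(φ (star (x₂ * y) * (x₂ * y))).re :=
        hdiff ▸ φ.toLinearMap.norm_apply_star_mul_le hφpos _ _
    _ ≤ √(φ ((x₁ - x₁') ^ 2)).re * (‖x₂‖ * ‖y‖) := by
        rw [hd, ← sq]
        gcongr
        exact (φ.sqrt_re_apply_star_mul_self_le hφnorm.le _).trans (norm_mul_le _ _)
    _ = ‖y‖ * ‖x₂‖ * √(φ ((x₁ - x₁') ^ 2)).re := by ring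

/-- Key estimate for the bi-free Wasserstein semimetric: if `φ` is a state on a unital
C*-algebra `A`, tracial on a unital C*-subalgebra `S`, and `y` is a self-adjoint element
commuting with `S`, then for self-adjoint `x₁, x₁', x₂ ∈ S`,
`|φ(x₁x₂y) − φ(x₁'x₂y)| ≤ ‖y‖·‖x₂‖·φ((x₁ − x₁')²)^{1/2}`. -/
theorem wasserstein_key_estimate {A : Type*} [NormedRing A] [CompleteSpace A]
    [StarRing A] [CStarRing A] [NormedAlgebra ℂ A] [StarModule ℂ A]
    (φ : A →L[ℂ] ℂ) (hφ1 : φ 1 = 1) (hφnorm : ‖φ‖ = 1)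
    (hφpos : ∀ a : A, 0 ≤ φ (star a * a))
    (S : StarSubalgebra ℂ A) (hSclosed : IsClosed (S : Set A))
    (hφtr : ∀ a b : A, a ∈ S → b ∈ S → φ (a * b) = φ (b * a))
    (y : A) (hy : IsSelfAdjoint y) (hyS : ∀ a ∈ S, Commute y a)
    (x₁ x₁' x₂ : A) (hx₁ : x₁ ∈ S) (hx₁' : x₁' ∈ S) (hx₂ : x₂ ∈ S)
    (hx₁sa : IsSelfAdjoint x₁) (hx₁'sa : IsSelfAdjoint x₁')
    (hx₂sa : IsSelfAdjoint x₂) :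
    ‖φ (x₁ * x₂ * y) - φ (x₁' * x₂ * y)‖
      ≤ ‖y‖ * ‖x₂‖ * Real.sqrt ((φ ((x₁ - x₁') ^ 2)).re) :=
  wasserstein_key_estimate_general φ hφnorm hφpos y x₁ x₁' x₂ hx₁sa hx₁'sa
end

section
/- Let A be a self-adjoint d×d complex matrix, let R > 0, and let f_R : ℝ → [−R, R] be the truncation function f_R(t) = max(−R, min(R, t)). Let M, M' be positive integers with M' even and M' ≥ M. Then, with ‖X‖_p = τ_d(|X|^p)^{1/p} denoting the p-norm with respect to the normalized trace τ_d, one has ‖A − f_R(A)‖_M ≤ R·(τ_d(A^{M'})/R^{M'})^{1/M}. -/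
/-!
`A - f_R(A)` is the functional calculus of `t ↦ t - f_R(t)` applied to `A`, so its eigenvalues
are the truncation errors `t - f_R(t)` of the eigenvalues `t` of `A`, and `τ_d(A^{M'})` is the
mean of `t^{M'}`. The error at `t` vanishes unless `R < |t|`, and is then at most `|t|`, so
`|t - f_R(t)|^M · R^{M' - M} ≤ |t|^{M'}`. Averaging over the eigenvalues and taking `M`-th
roots gives the estimate.
-/

open Matrix

namespace Matrix.IsHermitian

variable {𝕜 n : Type*} [RCLike 𝕜] [Fintype n] [DecidableEq n] {A B : Matrix n n 𝕜}

lemma roots_charpoly_cfc (hA : A.IsHermitian) (f : ℝ → ℝ) :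
    (cfc f A).charpoly.roots = Finset.univ.val.map (RCLike.ofReal ∘ f ∘ hA.eigenvalues) := by
  rw [hA.charpoly_cfc_eq, Polynomial.roots_prod]
  · simp
  · simp [Finset.prod_ne_zero_iff, Polynomial.X_sub_C_ne_zero]

lemma map_eigenvalues_of_eq_cfc (hA : A.IsHermitian) (hB : B.IsHermitian) {f : ℝ → ℝ}
    (hBA : B = cfc f A) :
    Finset.univ.val.map hB.eigenvalues = Finset.univ.val.map (f ∘ hA.eigenvalues) := by
  apply Multiset.map_injective (RCLike.ofReal_injective (K := 𝕜))
  rw [Multiset.map_map, Multiset.map_map, ← hB.roots_charpoly_eq_eigenvalues,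
    ← hA.roots_charpoly_cfc, hBA]

lemma sum_comp_eigenvalues_of_eq_cfc (hA : A.IsHermitian) (hB : B.IsHermitian) {f : ℝ → ℝ}
    (hBA : B = cfc f A) (φ : ℝ → ℝ) :
    ∑ i, φ (hB.eigenvalues i) = ∑ i, φ (f (hA.eigenvalues i)) := by
  simpa only [Multiset.map_map, Function.comp_def, Finset.sum_map_val] using
    congrArg (fun s => (s.map φ).sum) (map_eigenvalues_of_eq_cfc hA hB hBA)

lemma re_trace_pow_eq_sum (hA : A.IsHermitian) (k : ℕ) :
    RCLike.re (A ^ k).trace = ∑ i, hA.eigenvalues i ^ k := by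
  have hAk := hA.pow k
  rw [hAk.trace_eq_sum_eigenvalues, map_sum]
  simp only [RCLike.ofReal_re]
  exact sum_comp_eigenvalues_of_eq_cfc hA hAk (cfc_pow_id A k hA).symm id

lemma sub_cfc_eq_cfc (hA : A.IsHermitian) (f : ℝ → ℝ) :
    A - hA.cfc f = cfc (fun t => t - f t) A := by
  rw [cfc_sub (fun t => t) f A (by fun_prop) (A.finite_real_spectrum.continuousOn f), cfc_id' ℝ A,
    hA.cfc_eq]

end Matrix.IsHermitian

lemma abs_sub_clamp_pow_mul_le {R : ℝ} (hR : 0 ≤ R) {M M' : ℕ} (hM : M ≠ 0) (hMM' : M ≤ M')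
    (t : ℝ) : |t - max (-R) (min R t)| ^ M * R ^ (M' - M) ≤ |t| ^ M' := by
  rcases le_or_gt |t| R with ht | ht
  · rw [min_eq_right (le_of_abs_le ht), max_eq_right (neg_le_of_abs_le ht), sub_self, abs_zero,
      zero_pow hM, zero_mul]
    positivity
  · have herr : |t - max (-R) (min R t)| ≤ |t| := by grind
    calc |t - max (-R) (min R t)| ^ M * R ^ (M' - M) ≤ |t| ^ M * |t| ^ (M' - M) := by
          gcongr
      _ = |t| ^ M' := by rw [← pow_add, Nat.add_sub_cancel' hMM']

lemma rpow_inv_natCast_le_mul {x y R : ℝ} {M : ℕ} (hM : M ≠ 0) (hx : 0 ≤ x) (hy : 0 ≤ y)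
    (hR : 0 ≤ R) (h : x ≤ R ^ M * y) : x ^ (M : ℝ)⁻¹ ≤ R * y ^ (M : ℝ)⁻¹ := by
  calc x ^ (M : ℝ)⁻¹ ≤ (R ^ M * y) ^ (M : ℝ)⁻¹ := by gcongr
    _ = R * y ^ (M : ℝ)⁻¹ := by
      rw [Real.mul_rpow (by positivity) hy, Real.pow_rpow_inv_natCast hR hM]

theorem truncation_pnorm_estimate_general (d : ℕ)
    (A : Matrix (Fin d) (Fin d) ℂ) (hA : A.IsHermitian) (R : ℝ) (hR : 0 < R)
    (M M' : ℕ) (hM : 0 < M) (hM'even : Even M') (hMM' : M ≤ M')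
    (hD : (A - hA.cfc (fun t => max (-R) (min R t))).IsHermitian) :
    ((d : ℝ)⁻¹ * ∑ i, |hD.eigenvalues i| ^ M) ^ ((M : ℝ))⁻¹
      ≤ R * (((d : ℝ)⁻¹ * (A ^ M').trace.re) / R ^ M') ^ ((M : ℝ))⁻¹ := by
  set μ := hA.eigenvalues
  have hsum : ∑ i, |hD.eigenvalues i| ^ M = ∑ i, |μ i - max (-R) (min R (μ i))| ^ M :=
    hA.sum_comp_eigenvalues_of_eq_cfc hD (hA.sub_cfc_eq_cfc _) (|·| ^ M)
  have hbound : (∑ i, |μ i - max (-R) (min R (μ i))| ^ M) * R ^ (M' - M) ≤ ∑ i, μ i ^ M' := by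
    rw [Finset.sum_mul]
    gcongr with i
    rw [← hM'even.pow_abs]
    exact abs_sub_clamp_pow_mul_le hR.le hM.ne' hMM' _
  have htrace_nonneg : 0 ≤ ∑ i, μ i ^ M' := Finset.sum_nonneg fun i _ => hM'even.pow_nonneg _
  rw [hsum, show (A ^ M').trace.re = ∑ i, μ i ^ M' from hA.re_trace_pow_eq_sum M']
  apply rpow_inv_natCast_le_mul hM.ne' (by positivity) (by positivity) hR.le
  calc (d : ℝ)⁻¹ * ∑ i, |μ i - max (-R) (min R (μ i))| ^ M
      ≤ (d : ℝ)⁻¹ * ((∑ i, μ i ^ M') / R ^ (M' - M)) := by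
        gcongr
        rwa [le_div_iff₀ (by positivity)]
    _ = R ^ M * (((d : ℝ)⁻¹ * ∑ i, μ i ^ M') / R ^ M') := by
        rw [← pow_sub_mul_pow R hMM']
        field_simp

/-- Eigenvalue truncation estimate: for a self-adjoint `d × d` matrix `A`, `R > 0`, and
positive integers `M ≤ M'` with `M'` even, the `M`-norm (w.r.t. the normalized trace) of
`A − f_R(A)` is at most `R·(τ_d(A^{M'})/R^{M'})^{1/M}`, where `f_R` is the truncation to
`[−R, R]` applied via functional calculus. -/
theorem truncation_pnorm_estimate (d : ℕ) (hd : 0 < d)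
    (A : Matrix (Fin d) (Fin d) ℂ) (hA : A.IsHermitian) (R : ℝ) (hR : 0 < R)
    (M M' : ℕ) (hM : 0 < M) (hM'pos : 0 < M') (hM'even : Even M') (hMM' : M ≤ M')
    (hD : (A - hA.cfc (fun t => max (-R) (min R t))).IsHermitian) :
    ((d : ℝ)⁻¹ * ∑ i, |hD.eigenvalues i| ^ M) ^ ((M : ℝ))⁻¹
      ≤ R * (((d : ℝ)⁻¹ * (A ^ M').trace.re) / R ^ M') ^ ((M : ℝ))⁻¹ :=
  truncation_pnorm_estimate_general d A hA R hR M M' hM hM'even hMM' hD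
end
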